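/- The 3-dimensional model is non-Paschian: there exist three non-collinear points P, Q, R of the model and a line d of the model not through P, Q or R, such that d contains a point strictly between P and Q, d intersects both lines QR and RP of the model, but d contains no point strictly between Q and R and no point strictly between R and P. -/

import Mathlib

open Real

noncomputable section

/-- The vertices of the regular pentagon in the horizontal plane of `ℝ³`. -/
def pentagonPt (k : Fin 5) : Fin 3 → ℝ :=
  ![Real.cos (2 * π * (k.val : ℝ) / 5), Real.sin (2 * π * (k.val : ℝ) / 5), 0]

/-- The vertical unit direction. -/
def e3 : Fin 3 → ℝ := ![0, 0, 1]

/-- The vertical line of the model over the `k`-th pentagon vertex. -/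
def vertLine (k : Fin 5) : Set (Fin 3 → ℝ) := {x | ∃ t : ℝ, x = pentagonPt k + t • e3}

/-- The points of the model: the union of the five vertical lines. -/
def ModelPoints : Set (Fin 3 → ℝ) := ⋃ k, vertLine k

/-- Euclidean dot product in `ℝ³`. -/
def dot (n x : Fin 3 → ℝ) : ℝ := n 0 * x 0 + n 1 * x 1 + n 2 * x 2

/-- A five-point line of the model: the trace on the model points of a plane through the
origin with non-horizontal normal (such a plane contains no vertical line). -/
def IsFivePointLine (l : Set (Fin 3 → ℝ)) : Prop :=
  ∃ n : Fin 3 → ℝ, n 2 ≠ 0 ∧ l = {x ∈ ModelPoints | dot n x = 0}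

/-- A line of the model: a vertical line or a five-point line. -/
def IsModelLine (l : Set (Fin 3 → ℝ)) : Prop :=
  (∃ k, l = vertLine k) ∨ IsFivePointLine l

/-- Cyclic distance on `Fin 5`. -/
def cdist (j k : Fin 5) : ℕ :=
  min ((j.val + 5 - k.val) % 5) ((k.val + 5 - j.val) % 5)

/-- Betweenness on the five-point line `Fin 5`. -/
def Bet (x y z : Fin 5) : Prop :=
  x ≠ y ∧ y ≠ z ∧ x ≠ z ∧ cdist y x = cdist y z

/-- Betweenness in the model: Euclidean strict betweenness on a common vertical line, or,
for three points on three distinct vertical lines lying in a common plane through the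
origin with non-horizontal normal, the pentagon betweenness of the underlying vertices. -/
def MBet (X Y Z : Fin 3 → ℝ) : Prop :=
  (∃ k : Fin 5, X ∈ vertLine k ∧ Y ∈ vertLine k ∧ Z ∈ vertLine k ∧ Sbtw ℝ X Y Z) ∨
  (∃ j k l : Fin 5, j ≠ k ∧ k ≠ l ∧ j ≠ l ∧
    X ∈ vertLine j ∧ Y ∈ vertLine k ∧ Z ∈ vertLine l ∧
    (∃ n : Fin 3 → ℝ, n 2 ≠ 0 ∧ dot n X = 0 ∧ dot n Y = 0 ∧ dot n Z = 0) ∧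
    Bet j k l)

/- The triangle is `P = a₀`, `Q = b₀`, `R = c₁` (subscripts are heights) and `d` is the
vertical line over `D`. Every five-point line meets every vertical line, so `d` meets the lines
`QR` and `RP`; but a point of the vertical line `d` can only be between two points on other
vertical lines in the pentagon sense, and `D` lies between `A` and `B` but neither between `B`
and `C` nor between `C` and `A`. Non-collinearity holds because the only plane through the
origin containing two pentagon vertices is the horizontal one, which misses `R`. -/

open Matrix

instance (x y z : Fin 5) : Decidable (Bet x y z) :=
  inferInstanceAs (Decidable (_ ∧ _ ∧ _ ∧ _))

lemma dot_eq_dotProduct (n x : Fin 3 → ℝ) : dot n x = n ⬝ᵥ x := by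
  simp only [dot, dotProduct, Fin.sum_univ_three]

lemma pentagonPt_two (k : Fin 5) : pentagonPt k 2 = 0 := rfl

lemma mem_vertLine_iff {x : Fin 3 → ℝ} {k : Fin 5} :
    x ∈ vertLine k ↔ x 0 = pentagonPt k 0 ∧ x 1 = pentagonPt k 1 := by
  constructor
  · rintro ⟨t, rfl⟩
    simp [e3]
  · rintro ⟨h0, h1⟩
    refine ⟨x 2, funext fun i => ?_⟩
    fin_cases i <;> simp [h0, h1, e3, pentagonPt_two]

lemma pentagonPt_mem_vertLine (k : Fin 5) : pentagonPt k ∈ vertLine k :=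
  ⟨0, by simp⟩

lemma mem_modelPoints_of_mem_vertLine {x : Fin 3 → ℝ} {k : Fin 5} (h : x ∈ vertLine k) :
    x ∈ ModelPoints :=
  Set.mem_iUnion_of_mem k h

-- No two vertices of a regular pentagon are antipodal.
lemma pentagonPt_det_ne_zero {j k : Fin 5} (hjk : j ≠ k) :
    pentagonPt j 0 * pentagonPt k 1 - pentagonPt j 1 * pentagonPt k 0 ≠ 0 := by
  have hdet : pentagonPt j 0 * pentagonPt k 1 - pentagonPt j 1 * pentagonPt k 0 =
      Real.sin (2 * π * ((k.val : ℝ) - j.val) / 5) := by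
    simp only [pentagonPt, Matrix.cons_val_zero, Matrix.cons_val_one]
    rw [show 2 * π * ((k.val : ℝ) - j.val) / 5 =
      2 * π * (k.val : ℝ) / 5 - 2 * π * (j.val : ℝ) / 5 by ring, Real.sin_sub]
    ring
  rw [hdet]
  intro hsin
  obtain ⟨n, hn⟩ := Real.sin_eq_zero_iff.1 hsin
  have hreal : ((5 * n : ℤ) : ℝ) = ((2 * ((k.val : ℤ) - j.val) : ℤ) : ℝ) := by
    push_cast
    nlinarith [Real.pi_pos]
  have hint := Int.cast_injective hreal
  have : j.val ≠ k.val := Fin.val_ne_of_ne hjk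
  omega

lemma eq_of_mem_vertLine {x : Fin 3 → ℝ} {j k : Fin 5} (hj : x ∈ vertLine j)
    (hk : x ∈ vertLine k) : j = k := by
  rw [mem_vertLine_iff] at hj hk
  by_contra hjk
  apply pentagonPt_det_ne_zero hjk
  rw [← hj.1, ← hj.2, hk.1, hk.2]
  ring

lemma bet_of_mBet {X Y Z : Fin 3 → ℝ} {a b c : Fin 5} (hX : X ∈ vertLine a)
    (hY : Y ∈ vertLine b) (hZ : Z ∈ vertLine c) (hab : a ≠ b) (h : MBet X Y Z) :
    Bet a b c := by
  rcases h with ⟨k, hXk, hYk, -, -⟩ | ⟨j, k, l, -, -, -, hXj, hYk, hZl, -, hjkl⟩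
  · exact absurd ((eq_of_mem_vertLine hX hXk).trans (eq_of_mem_vertLine hYk hY)) hab
  · rwa [eq_of_mem_vertLine hX hXj, eq_of_mem_vertLine hY hYk, eq_of_mem_vertLine hZ hZl]

lemma mBet_pentagonPt {j k l : Fin 5} (h : Bet j k l) :
    MBet (pentagonPt j) (pentagonPt k) (pentagonPt l) := by
  refine Or.inr ⟨j, k, l, h.1, h.2.1, h.2.2.1, pentagonPt_mem_vertLine j,
    pentagonPt_mem_vertLine k, pentagonPt_mem_vertLine l,
    ⟨e3, by simp [e3], ?_, ?_, ?_⟩, h⟩ <;>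
    simp [dot, e3, pentagonPt_two]

lemma IsFivePointLine.vertLine_inter_nonempty {l : Set (Fin 3 → ℝ)} (hl : IsFivePointLine l)
    (k : Fin 5) : (vertLine k ∩ l).Nonempty := by
  obtain ⟨n, hn, rfl⟩ := hl
  set t := -dot n (pentagonPt k) / n 2
  have hmem : pentagonPt k + t • e3 ∈ vertLine k := ⟨t, rfl⟩
  refine ⟨_, hmem, mem_modelPoints_of_mem_vertLine hmem, ?_⟩
  have hdot : dot n (pentagonPt k + t • e3) = dot n (pentagonPt k) + n 2 * t := by
    simp [dot, e3, pentagonPt_two]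
  rw [hdot, mul_div_cancel₀ _ hn, add_neg_cancel]

lemma exists_isFivePointLine_mem {X Y : Fin 3 → ℝ} {j k : Fin 5} (hX : X ∈ vertLine j)
    (hY : Y ∈ vertLine k) (hjk : j ≠ k) :
    ∃ l, IsFivePointLine l ∧ X ∈ l ∧ Y ∈ l := by
  refine ⟨{x ∈ ModelPoints | dot (X ⨯₃ Y) x = 0}, ⟨X ⨯₃ Y, ?_, rfl⟩,
    ⟨mem_modelPoints_of_mem_vertLine hX, ?_⟩, ⟨mem_modelPoints_of_mem_vertLine hY, ?_⟩⟩
  · rw [mem_vertLine_iff] at hX hY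
    simpa [cross_apply, hX.1, hX.2, hY.1, hY.2] using pentagonPt_det_ne_zero hjk
  · rw [dot_eq_dotProduct, dotProduct_comm, dot_self_cross]
  · rw [dot_eq_dotProduct, dotProduct_comm, dot_cross_self]

lemma exists_modelLine_mem_meets_vertLine {X Y : Fin 3 → ℝ} {j k : Fin 5}
    (hX : X ∈ vertLine j) (hY : Y ∈ vertLine k) (hjk : j ≠ k) (m : Fin 5) :
    ∃ l, IsModelLine l ∧ X ∈ l ∧ Y ∈ l ∧ (vertLine m ∩ l).Nonempty := by
  obtain ⟨l, hl, hXl, hYl⟩ := exists_isFivePointLine_mem hX hY hjk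
  exact ⟨l, Or.inr hl, hXl, hYl, hl.vertLine_inter_nonempty m⟩

lemma normal_horizontal_eq_zero_of_dot_pentagonPt {n : Fin 3 → ℝ} {j k : Fin 5} (hjk : j ≠ k)
    (hj : dot n (pentagonPt j) = 0) (hk : dot n (pentagonPt k) = 0) : n 0 = 0 ∧ n 1 = 0 := by
  have hdet := pentagonPt_det_ne_zero hjk
  simp only [dot, pentagonPt_two, mul_zero, add_zero] at hj hk
  constructor
  · refine (mul_eq_zero.1 (?_ : n 0 * _ = 0)).resolve_right hdet
    linear_combination pentagonPt k 1 * hj - pentagonPt j 1 * hk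
  · refine (mul_eq_zero.1 (?_ : n 1 * _ = 0)).resolve_right hdet
    linear_combination pentagonPt j 0 * hk - pentagonPt k 0 * hj

lemma IsModelLine.notMem_of_pentagonPt_mem {l : Set (Fin 3 → ℝ)} {j k : Fin 5}
    {X : Fin 3 → ℝ} (hl : IsModelLine l) (hjk : j ≠ k) (hj : pentagonPt j ∈ l)
    (hk : pentagonPt k ∈ l)
    (hX : X 2 ≠ 0) : X ∉ l := by
  rcases hl with ⟨m, rfl⟩ | ⟨n, hn, rfl⟩
  · exact fun _ => hjk ((eq_of_mem_vertLine (pentagonPt_mem_vertLine j) hj).trans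
      (eq_of_mem_vertLine hk (pentagonPt_mem_vertLine k)))
  · obtain ⟨h0, h1⟩ := normal_horizontal_eq_zero_of_dot_pentagonPt hjk hj.2 hk.2
    rintro ⟨-, hXl⟩
    simp only [dot, h0, h1, zero_mul, zero_add] at hXl
    exact mul_ne_zero hn hX hXl

/-- The model is non-Paschian: there are three non-collinear points `P, Q, R` and a model
line `d` avoiding them which meets the open segment `PQ` and meets the lines `QR` and
`RP`, yet contains no point strictly between `Q` and `R` nor between `R` and `P`. -/
theorem model_not_Paschian :
    ∃ P Q R : Fin 3 → ℝ, P ∈ ModelPoints ∧ Q ∈ ModelPoints ∧ R ∈ ModelPoints ∧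
      (¬ ∃ l : Set (Fin 3 → ℝ), IsModelLine l ∧ P ∈ l ∧ Q ∈ l ∧ R ∈ l) ∧
      ∃ d : Set (Fin 3 → ℝ), IsModelLine d ∧ P ∉ d ∧ Q ∉ d ∧ R ∉ d ∧
        (∃ D, D ∈ d ∧ MBet P D Q) ∧
        (∃ lQR : Set (Fin 3 → ℝ), IsModelLine lQR ∧ Q ∈ lQR ∧ R ∈ lQR ∧
          (d ∩ lQR).Nonempty) ∧
        (∃ lRP : Set (Fin 3 → ℝ), IsModelLine lRP ∧ R ∈ lRP ∧ P ∈ lRP ∧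
          (d ∩ lRP).Nonempty) ∧
        (¬ ∃ E, E ∈ d ∧ MBet Q E R) ∧
        (¬ ∃ F, F ∈ d ∧ MBet R F P) := by
  have hP := pentagonPt_mem_vertLine 0
  have hQ := pentagonPt_mem_vertLine 1
  have hR : pentagonPt 2 + e3 ∈ vertLine 2 := ⟨1, by rw [one_smul]⟩
  refine ⟨_, _, _, mem_modelPoints_of_mem_vertLine hP, mem_modelPoints_of_mem_vertLine hQ,
    mem_modelPoints_of_mem_vertLine hR, ?_, vertLine 3, Or.inl ⟨3, rfl⟩,
    fun h => absurd (eq_of_mem_vertLine hP h) (by decide),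
    fun h => absurd (eq_of_mem_vertLine hQ h) (by decide),
    fun h => absurd (eq_of_mem_vertLine hR h) (by decide),
    ⟨_, pentagonPt_mem_vertLine 3, mBet_pentagonPt (by decide)⟩,
    exists_modelLine_mem_meets_vertLine hQ hR (by decide) 3,
    exists_modelLine_mem_meets_vertLine hR hP (by decide) 3,
    fun ⟨_, hE, h⟩ => absurd (bet_of_mBet hQ hE hR (by decide) h) (by decide),
    fun ⟨_, hF, h⟩ => absurd (bet_of_mBet hR hF hP (by decide) h) (by decide)⟩
  rintro ⟨l, hl, hPl, hQl, hRl⟩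
  exact hl.notMem_of_pentagonPt_mem (by decide) hPl hQl (by simp [e3, pentagonPt_two]) hRl

end
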